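/- Let n ≥ 1, 0 ≤ l ≤ n, and let Λ be any ℂ-linear map from 2^n×2^n complex matrices to 2^n×2^n complex matrices. Then Σ_{S⊆[2n], |S|=2l} Σ_{b∈{0,1}^n} tr(γ_S† |b⟩⟨b|) · tr(|b⟩⟨b| · Λ(γ_S)) = Σ_{T⊆[n], |T|=l} tr(γ_{pairs(T)}† · Λ(γ_{pairs(T)})). Consequently the noisy channel eigenvalue f̃_{2l} := binom(2n,2l)^{−1} · 2^{−n} Σ_{S, |S|=2l} Σ_b tr(γ_S† |b⟩⟨b|) tr(|b⟩⟨b| Λ(γ_S)) equals binom(2n,2l)^{−1} Σ_{T⊆[n], |T|=l} 2^{−n} tr(γ_{pairs(T)}† Λ(γ_{pairs(T)})). -/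
import Mathlib


open Matrix Finset

noncomputable section

namespace QCQMC

/-- State vectors on `n` qubits, indexed by bitstrings. -/
abbrev QState (n : ℕ) := (Fin n → Bool) → ℂ

/-- Operators (2^n × 2^n matrices) on `n` qubits. -/
abbrev QOp (n : ℕ) := Matrix (Fin n → Bool) (Fin n → Bool) ℂ

/-- Computational basis state `|b⟩`. -/
def ket (n : ℕ) (b : Fin n → Bool) : QState n := fun b' => if b' = b then 1 else 0

/-- The all-zero state `|0…0⟩`. -/
def ket0 (n : ℕ) : QState n := ket n (fun _ => false)

/-- Outer product `|u⟩⟨v|`. -/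
def outer {n : ℕ} (u v : QState n) : QOp n :=
  Matrix.of fun x y => u x * (starRingEnd ℂ) (v y)

/-- Hamming weight of a bitstring. -/
def hamming {n : ℕ} (b : Fin n → Bool) : ℕ := (Finset.univ.filter fun i => b i = true).card

/-- Jordan–Wigner Majorana operator.  The index `μ : Fin (2*n)` (0-indexed) corresponds to
`γ_{μ+1}` in 1-indexed notation:  for `μ = 2j` (0-indexed, qubit `j`) this is
`Z^{⊗j} ⊗ X ⊗ I^{⊗(n-j-1)}`, and for `μ = 2j+1` it is `Z^{⊗j} ⊗ Y ⊗ I^{⊗(n-j-1)}`. -/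
def majorana (n : ℕ) (μ : Fin (2 * n)) : QOp n :=
  Matrix.of fun b b' =>
    if h : (b ⟨μ.1 / 2, by have := μ.2; omega⟩ ≠ b' ⟨μ.1 / 2, by have := μ.2; omega⟩) ∧
        (∀ i : Fin n, i.1 ≠ μ.1 / 2 → b i = b' i) then
      (∏ i : Fin n, if i.1 < μ.1 / 2 ∧ b i = true then (-1 : ℂ) else 1) *
      (if μ.1 % 2 = 0 then 1
       else if b ⟨μ.1 / 2, by have := μ.2; omega⟩ = true then Complex.I else -Complex.I)
    else 0

/-- Majorana string `γ_S`, the product of `γ_μ` for `μ ∈ S` in ascending index order. -/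
def gammaS (n : ℕ) (S : Finset (Fin (2 * n))) : QOp n :=
  ((S.sort (· ≤ ·)).map (majorana n)).prod

/-- The superoperator `Π_{2l}(A) = 2^{-n} Σ_{|S| = 2l} tr(γ_S† A) γ_S`. -/
def PiEven (n l : ℕ) (A : QOp n) : QOp n :=
  ((2 : ℂ) ^ n)⁻¹ •
    ∑ S ∈ Finset.univ.filter (fun S : Finset (Fin (2 * n)) => S.card = 2 * l),
      (Matrix.trace ((gammaS n S)ᴴ * A)) • gammaS n S

/-- Orthogonal projector `P_{0,ζ}` onto the span of `|0…0⟩` and the computational basis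
states of Hamming weight `ζ`. -/
def projZeroZeta (n ζ : ℕ) : QOp n :=
  Matrix.diagonal (fun b => if b = (fun _ => false) ∨ hamming b = ζ then 1 else 0)

/-- The coefficients `b_{2l}`. -/
def bcoef (n ζ l : ℕ) : ℂ :=
  if ζ / 2 ≤ l ∧ l + ζ / 2 ≤ n then
    (2 : ℂ) ^ ζ / 2 ^ n * ((n - ζ).choose (l - ζ / 2)) else 0

/-- `pairs(T) = ∪_{j ∈ T} {2j-1, 2j}` (0-indexed: `{2j, 2j+1}`). -/
def pairsSet (n : ℕ) (T : Finset (Fin n)) : Finset (Fin (2 * n)) :=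
  Finset.univ.filter fun μ : Fin (2 * n) => (⟨μ.1 / 2, by have := μ.2; omega⟩ : Fin n) ∈ T


variable {n : ℕ}

lemma trace_conjT_outer (A : QOp n) (b : Fin n → Bool) :
    Matrix.trace (Aᴴ * outer (ket n b) (ket n b)) = (starRingEnd ℂ) (A b b) := by
  simp [Matrix.trace, Matrix.mul_apply, Matrix.diag, outer, ket, Matrix.conjTranspose_apply,
    mul_ite, ite_mul, Finset.sum_ite_eq']

lemma trace_outer_mul (M : QOp n) (b : Fin n → Bool) :
    Matrix.trace (outer (ket n b) (ket n b) * M) = M b b := by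
  simp [Matrix.trace, Matrix.mul_apply, Matrix.diag, outer, ket,
    mul_ite, ite_mul, Finset.sum_ite_eq']

lemma prod_majorana_eq_zero (L : List (Fin (2 * n))) (b b' : Fin n → Bool) (j : Fin n)
    (h : b' j ≠ Bool.xor (Nat.bodd (L.countP (fun μ => decide (μ.1 / 2 = j.1)))) (b j)) :
    (L.map (majorana n)).prod b b' = 0 := by
  induction L generalizing b with
  | nil =>
    simp only [List.countP_nil, Nat.bodd_zero, Bool.false_xor] at h
    have hne : b ≠ b' := fun hb => h (hb ▸ rfl)
    simp only [List.map_nil, List.prod_nil, Matrix.one_apply]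
    exact if_neg hne
  | cons μ L ih =>
    simp only [List.map_cons, List.prod_cons, Matrix.mul_apply]
    refine Finset.sum_eq_zero fun c _ => ?_
    by_cases hm : majorana n μ b c = 0
    · simp [hm]
    have hP : (b ⟨μ.1 / 2, by have := μ.2; omega⟩ ≠ c ⟨μ.1 / 2, by have := μ.2; omega⟩) ∧
        (∀ i : Fin n, i.1 ≠ μ.1 / 2 → b i = c i) := by
      by_contra hc
      exact hm (by simp [majorana, hc])
    rw [ih c ?_, mul_zero]
    rw [List.countP_cons] at h
    by_cases hj : μ.1 / 2 = j.1
    · have hq : (⟨μ.1 / 2, by have := μ.2; omega⟩ : Fin n) = j := Fin.ext hj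
      rw [hq] at hP
      have hbc : c j = !(b j) := by
        cases hcj : c j <;> cases hbj : b j <;> simp_all
      have hd : (decide (μ.1 / 2 = j.1)) = true := by simp [hj]
      rw [hd, if_pos rfl] at h
      rw [hbc]
      intro he
      apply h
      rw [he, Nat.bodd_succ]
      cases Nat.bodd (List.countP (fun μ => decide (μ.1 / 2 = j.1)) L) <;> cases b j <;> rfl
    · have hbc : b j = c j := hP.2 j (fun he => hj he.symm)
      have hd : (decide (μ.1 / 2 = j.1)) = false := by simp [hj]
      rw [hd] at h
      simp only [Bool.false_eq_true, if_false, add_zero] at h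
      rw [← hbc]
      exact h

lemma gammaS_eq_zero (S : Finset (Fin (2 * n))) (b b' : Fin n → Bool) (j : Fin n)
    (h : b' j ≠ Bool.xor (Nat.bodd ((S.filter (fun μ => μ.1 / 2 = j.1)).card)) (b j)) :
    gammaS n S b b' = 0 := by
  apply prod_majorana_eq_zero
  have hc : (S.sort (· ≤ ·)).countP (fun μ => decide (μ.1 / 2 = j.1))
      = (S.filter (fun μ => μ.1 / 2 = j.1)).card := by
    rw [← Multiset.coe_countP, Finset.sort_eq, Multiset.countP_eq_card_filter]
    rfl
  rw [hc]; exact h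

def qub (μ : Fin (2 * n)) : Fin n := ⟨μ.1 / 2, by have := μ.2; omega⟩
def evIdx (j : Fin n) : Fin (2 * n) := ⟨2 * j.1, by have := j.2; omega⟩
def odIdx (j : Fin n) : Fin (2 * n) := ⟨2 * j.1 + 1, by have := j.2; omega⟩

@[simp] lemma qub_evIdx (j : Fin n) : qub (evIdx j) = j := Fin.ext (by simp [qub, evIdx])
@[simp] lemma qub_odIdx (j : Fin n) : qub (odIdx j) = j := Fin.ext (by simp [qub, odIdx]; omega)

lemma evIdx_or_odIdx (μ : Fin (2 * n)) : μ = evIdx (qub μ) ∨ μ = odIdx (qub μ) := by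
  rcases Nat.even_or_odd μ.1 with ⟨k, hk⟩ | ⟨k, hk⟩
  · left; exact Fin.ext (by simp [qub, evIdx]; omega)
  · right; exact Fin.ext (by simp [qub, odIdx]; omega)

lemma evIdx_ne_odIdx (j j' : Fin n) : evIdx j ≠ odIdx j' := by
  simp [evIdx, odIdx, Fin.ext_iff]; omega

def Tof (S : Finset (Fin (2 * n))) : Finset (Fin n) :=
  Finset.univ.filter fun j => evIdx j ∈ S

lemma mem_pairsSet {T : Finset (Fin n)} {μ : Fin (2 * n)} :
    μ ∈ pairsSet n T ↔ qub μ ∈ T := by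
  simp [pairsSet, qub]

lemma Tof_pairsSet (T : Finset (Fin n)) : Tof (pairsSet n T) = T := by
  ext j
  rw [Tof, Finset.mem_filter, mem_pairsSet, qub_evIdx]
  simp

lemma pairsSet_eq_biUnion (T : Finset (Fin n)) :
    pairsSet n T = T.biUnion (fun j => {evIdx j, odIdx j}) := by
  ext μ
  rw [mem_pairsSet, Finset.mem_biUnion]
  constructor
  · intro hμ
    exact ⟨qub μ, hμ, by simpa using evIdx_or_odIdx μ⟩
  · rintro ⟨j, hj, hmem⟩
    simp only [Finset.mem_insert, Finset.mem_singleton] at hmem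
    rcases hmem with rfl | rfl <;> simp [hj]

lemma card_pairsSet (T : Finset (Fin n)) : (pairsSet n T).card = 2 * T.card := by
  rw [pairsSet_eq_biUnion, Finset.card_biUnion]
  · rw [Finset.sum_congr rfl (fun j _ => ?_), Finset.sum_const, smul_eq_mul, mul_comm]
    rw [Finset.card_insert_of_notMem (by simpa using evIdx_ne_odIdx j j),
      Finset.card_singleton]
  · intro x _ y _ hxy
    simp only [Finset.disjoint_left]
    intro a ha hb
    simp only [Finset.mem_insert, Finset.mem_singleton] at ha hb
    apply hxy
    have : qub a = x := by rcases ha with rfl | rfl <;> simp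
    have h2 : qub a = y := by rcases hb with rfl | rfl <;> simp
    rw [← this, h2]

lemma filter_pairsSet (T : Finset (Fin n)) (j : Fin n) :
    (pairsSet n T).filter (fun μ => μ.1 / 2 = j.1)
      = if j ∈ T then ({evIdx j, odIdx j} : Finset (Fin (2 * n))) else ∅ := by
  ext μ
  by_cases hj : j ∈ T
  · rw [if_pos hj]
    simp only [Finset.mem_filter, mem_pairsSet, Finset.mem_insert, Finset.mem_singleton]
    constructor
    · rintro ⟨hT, hdiv⟩
      have hq : qub μ = j := Fin.ext hdiv
      rcases evIdx_or_odIdx μ with h | h <;> [left; right] <;> rw [h, hq]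
    · rintro (rfl | rfl)
      · exact ⟨by rw [qub_evIdx]; exact hj, by simp [evIdx]⟩
      · exact ⟨by rw [qub_odIdx]; exact hj, by simp [odIdx]; omega⟩
  · rw [if_neg hj]
    simp only [Finset.mem_filter, mem_pairsSet, Finset.notMem_empty, iff_false, not_and]
    intro hT hdiv
    have hq : qub μ = j := Fin.ext hdiv
    rw [hq] at hT
    exact hj hT

lemma bodd_filter_pairsSet (T : Finset (Fin n)) (j : Fin n) :
    Nat.bodd (((pairsSet n T).filter (fun μ => μ.1 / 2 = j.1)).card) = false := by
  rw [filter_pairsSet]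
  by_cases hj : j ∈ T
  · rw [if_pos hj, Finset.card_insert_of_notMem (by simpa using evIdx_ne_odIdx j j),
      Finset.card_singleton]
    rfl
  · rw [if_neg hj, Finset.card_empty]
    rfl

lemma gammaS_pairsSet_diag (T : Finset (Fin n)) (b b' : Fin n → Bool) (hbb : b ≠ b') :
    gammaS n (pairsSet n T) b b' = 0 := by
  obtain ⟨j, hj⟩ := Function.ne_iff.1 hbb
  apply gammaS_eq_zero _ _ _ j
  rw [bodd_filter_pairsSet, Bool.false_xor]
  exact fun he2 => hj he2.symm

lemma exists_odd_of_not_paired (S : Finset (Fin (2 * n))) (hS : pairsSet n (Tof S) ≠ S) :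
    ∃ j : Fin n, Nat.bodd ((S.filter (fun μ => μ.1 / 2 = j.1)).card) = true := by
  have : ¬ ∀ μ, μ ∈ pairsSet n (Tof S) ↔ μ ∈ S := fun h => hS (Finset.ext h)
  push_neg at this
  obtain ⟨μ, hμ⟩ := this
  have hmem : μ ∈ pairsSet n (Tof S) ↔ evIdx (qub μ) ∈ S := by
    rw [mem_pairsSet, Tof, Finset.mem_filter]
    simp
  rw [hmem] at hμ
  have hodd : (odIdx (qub μ) ∈ S ∧ evIdx (qub μ) ∉ S) ∨
      (odIdx (qub μ) ∉ S ∧ evIdx (qub μ) ∈ S) := by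
    rcases evIdx_or_odIdx μ with h | h
    · rw [h, qub_evIdx] at hμ
      tauto
    · rw [h, qub_odIdx] at hμ
      tauto
  generalize qub μ = j at hodd
  refine ⟨j, ?_⟩
  have hfe : S.filter (fun μ' => μ'.1 / 2 = j.1)
      = S.filter (fun μ' => μ' = evIdx j ∨ μ' = odIdx j) := by
    refine Finset.filter_congr fun μ' _ => ?_
    constructor
    · intro hdiv
      have hq : qub μ' = j := Fin.ext hdiv
      rcases evIdx_or_odIdx μ' with h | h <;> [left; right] <;> rw [h, hq]
    · rintro (rfl | rfl)
      · simp [evIdx]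
      · simp [odIdx]; omega
  rw [hfe, Finset.filter_or, Finset.filter_eq', Finset.filter_eq']
  rcases hodd with ⟨h1, h2⟩ | ⟨h1, h2⟩
  · rw [if_neg h2, if_pos h1, Finset.empty_union, Finset.card_singleton]
    rfl
  · rw [if_pos h2, if_neg h1, Finset.union_empty, Finset.card_singleton]
    rfl

lemma trace_diag (A M : QOp n) (hdiag : ∀ b b', b ≠ b' → A b b' = 0) :
    Matrix.trace (Aᴴ * M) = ∑ b, (starRingEnd ℂ) (A b b) * M b b := by
  simp only [Matrix.trace, Matrix.diag, Matrix.mul_apply, Matrix.conjTranspose_apply]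
  refine Finset.sum_congr rfl fun x _ => ?_
  rw [Finset.sum_eq_single x]
  · rfl
  · intro y _ hyx
    rw [hdiag y x hyx]
    simp
  · intro hx
    exact absurd (Finset.mem_univ x) hx


/-- for any linear noise map `Λ`, the double sum over Majorana strings of
size `2l` and measurement outcomes reduces to a sum over full-pair strings, giving the
noisy channel eigenvalue `f̃_{2l}`. -/
theorem noisy_channel_eigenvalue (n l : ℕ) (hn : 1 ≤ n) (hl : l ≤ n)
    (Λ : QOp n →ₗ[ℂ] QOp n) :
    (∑ S ∈ Finset.univ.filter (fun S : Finset (Fin (2 * n)) => S.card = 2 * l),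
      ∑ b : Fin n → Bool,
        Matrix.trace ((gammaS n S)ᴴ * outer (ket n b) (ket n b)) *
        Matrix.trace (outer (ket n b) (ket n b) * Λ (gammaS n S)))
      = ∑ T ∈ Finset.univ.filter (fun T : Finset (Fin n) => T.card = l),
          Matrix.trace ((gammaS n (pairsSet n T))ᴴ * Λ (gammaS n (pairsSet n T)))
    ∧ (((2 * n).choose (2 * l) : ℂ))⁻¹ * ((2 : ℂ) ^ n)⁻¹ *
        (∑ S ∈ Finset.univ.filter (fun S : Finset (Fin (2 * n)) => S.card = 2 * l),
          ∑ b : Fin n → Bool,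
            Matrix.trace ((gammaS n S)ᴴ * outer (ket n b) (ket n b)) *
            Matrix.trace (outer (ket n b) (ket n b) * Λ (gammaS n S)))
      = (((2 * n).choose (2 * l) : ℂ))⁻¹ *
          ∑ T ∈ Finset.univ.filter (fun T : Finset (Fin n) => T.card = l),
            ((2 : ℂ) ^ n)⁻¹ *
              Matrix.trace ((gammaS n (pairsSet n T))ᴴ * Λ (gammaS n (pairsSet n T))) := by

  have h1 : (∑ S ∈ Finset.univ.filter (fun S : Finset (Fin (2 * n)) => S.card = 2 * l),
      ∑ b : Fin n → Bool,
        Matrix.trace ((gammaS n S)ᴴ * outer (ket n b) (ket n b)) *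
        Matrix.trace (outer (ket n b) (ket n b) * Λ (gammaS n S)))
      = ∑ T ∈ Finset.univ.filter (fun T : Finset (Fin n) => T.card = l),
          Matrix.trace ((gammaS n (pairsSet n T))ᴴ * Λ (gammaS n (pairsSet n T))) := by
    have hterm : ∀ S : Finset (Fin (2 * n)),
        (∑ b : Fin n → Bool,
          Matrix.trace ((gammaS n S)ᴴ * outer (ket n b) (ket n b)) *
          Matrix.trace (outer (ket n b) (ket n b) * Λ (gammaS n S)))
        = ∑ b : Fin n → Bool, (starRingEnd ℂ) (gammaS n S b b) * (Λ (gammaS n S)) b b := by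
      intro S
      refine Finset.sum_congr rfl fun b _ => ?_
      rw [trace_conjT_outer, trace_outer_mul]
    rw [Finset.sum_congr rfl fun S _ => hterm S]
    rw [← Finset.sum_filter_add_sum_filter_not
      (Finset.univ.filter (fun S : Finset (Fin (2 * n)) => S.card = 2 * l))
      (fun S => pairsSet n (Tof S) = S)]
    have hzero : ∑ S ∈ (Finset.univ.filter
          (fun S : Finset (Fin (2 * n)) => S.card = 2 * l)).filter
          (fun S => ¬ pairsSet n (Tof S) = S),
        (∑ b : Fin n → Bool, (starRingEnd ℂ) (gammaS n S b b) * (Λ (gammaS n S)) b b) = 0 := by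
      refine Finset.sum_eq_zero fun S hS => ?_
      simp only [Finset.mem_filter] at hS
      obtain ⟨j, hj⟩ := exists_odd_of_not_paired S hS.2
      refine Finset.sum_eq_zero fun b _ => ?_
      rw [gammaS_eq_zero S b b j (by rw [hj]; cases b j <;> simp)]
      simp
    rw [hzero, add_zero]
    refine Finset.sum_nbij' Tof (pairsSet n) ?_ ?_ ?_ ?_ ?_
    · intro S hS
      simp only [Finset.mem_filter] at hS ⊢
      refine ⟨Finset.mem_univ _, ?_⟩
      have := card_pairsSet (Tof S)
      rw [hS.2] at this
      omega
    · intro T hT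
      simp only [Finset.mem_filter] at hT ⊢
      exact ⟨⟨Finset.mem_univ _, by rw [card_pairsSet, hT.2]⟩, by rw [Tof_pairsSet]⟩
    · intro S hS
      simp only [Finset.mem_filter] at hS
      exact hS.2
    · intro T _
      exact Tof_pairsSet T
    · intro S hS
      simp only [Finset.mem_filter] at hS
      obtain ⟨T, rfl⟩ : ∃ T, S = pairsSet n T := ⟨Tof S, hS.2.symm⟩
      rw [Tof_pairsSet]
      exact (trace_diag _ _ (gammaS_pairsSet_diag T)).symm
  refine ⟨h1, ?_⟩
  rw [h1]
  simp only [Finset.mul_sum]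
  refine Finset.sum_congr rfl fun T _ => ?_
  ring

end QCQMC

end
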